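/- (Uniform lower-tail exponential bound under the alternative.) For each ε ∈ (0,1) let F_ε be a finite index set, (ω_{ε,k})_{k∈F_ε} positive weights with Σ_{k∈F_ε} ω_{ε,k}² = 1/2, and A_ε ⊆ ℝ^{F_ε} a set of mean vectors. For θ ∈ A_ε let X_k = θ_k + ε ξ_k with (ξ_k) i.i.d. standard normal, t_ε(θ) = Σ_{k∈F_ε} ω_{ε,k}[(X_k/ε)² − 1], and m_ε(θ) = E_θ t_ε(θ) = ε^{−2} Σ_k ω_{ε,k} θ_k². Suppose T_ε → −∞, T_ε · max_k ω_{ε,k} → 0, and sup_{θ∈A_ε} m_ε(θ) · max_k ω_{ε,k} → 0 as ε → 0. Then, uniformly in θ ∈ A_ε, P_θ( t_ε(θ) − m_ε(θ) ≤ T_ε ) ≤ exp(−(T_ε²/2)(1+o(1))) as ε → 0; i.e. limsup_{ε→0} sup_{θ∈A_ε} T_ε^{−2} log P_θ(t_ε(θ) − m_ε(θ) ≤ T_ε) ≤ −1/2. -/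

import Mathlib

/-!
Chernoff bound with parameter `L = -T`. Under `P_θ` the coordinates are independent, so
`E exp(-L (t - m))` factorises into `exp(L m)` times noncentral chi-square moment generating
functions, which are explicit: with `w = L ω_k` and `p = (θ_k/ε)²`,
`E exp(-w((X_k/ε)² - 1)) = e^w (1 + 2w)^{-1/2} exp(-w p / (1 + 2w)) ≤ exp(w² - w p + 2 w² p)`,
using `log (1 + x) ≥ x - x²/2`. Summing over `k`, `∑ w² = L²/2`, the linear terms cancel
`L m`, and `2 L² ∑ ω_k² p_k ≤ 2 L² (max ω) m = o(L²)`, so the probability is at most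
`exp(-L²/2 + o(L²))`.

Since `log 0 = 0`, the probability must also be shown positive: at `x = 0` the centred
statistic equals `-∑ ω_k - m`, and `∑ ω_k ≥ 2 |T|` once `|T| max ω ≤ 1/4`.
-/

open MeasureTheory ProbabilityTheory Filter Real Set
open scoped Topology NNReal

lemma exp_sub_sq_le_sqrt_one_add_two_mul {w : ℝ} (hw : 0 ≤ w) :
    exp (w - w ^ 2) ≤ √(1 + 2 * w) := by
  rw [le_sqrt (exp_pos _).le (by linarith), ← exp_nat_mul,
    ← exp_log (by linarith : 0 < 1 + 2 * w), exp_le_exp]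
  have hlog := le_log_one_add_of_nonneg (by linarith : 0 ≤ 2 * w)
  refine le_trans ?_ hlog
  rw [le_div_iff₀ (by linarith)]
  push_cast
  nlinarith [pow_nonneg hw 3]

lemma integral_exp_mul_sq_gaussianReal (μ : ℝ) {v : ℝ≥0} (hv : v ≠ 0) {c : ℝ}
    (hc : 2 * v * c < 1) :
    ∫ x, exp (c * x ^ 2) ∂gaussianReal μ v =
      (√(1 - 2 * v * c))⁻¹ * exp (c * μ ^ 2 / (1 - 2 * v * c)) := by
  set D := 1 - 2 * v * c
  have hD : 0 < D := by simp only [D]; linarith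
  have hv₀ : (0 : ℝ) < v := by positivity
  -- completing the square in the exponent of the density
  have hpt : ∀ x, gaussianPDFReal μ v x • exp (c * x ^ 2) =
      (√(2 * π * v))⁻¹ * (exp (-(D / (2 * v)) * (x - μ / D) ^ 2) * exp (c * μ ^ 2 / D)) := by
    intro x
    rw [gaussianPDFReal, smul_eq_mul, mul_assoc, ← exp_add, ← exp_add]
    congr 2
    field_simp
    ring
  simp_rw [integral_gaussianReal_eq_integral_smul hv, hpt, integral_const_mul,
    integral_mul_const, integral_sub_right_eq_self (fun y => exp (-(D / (2 * v)) * y ^ 2)),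
    integral_gaussian]
  rw [show π / (D / (2 * v)) = 2 * π * v / D by field_simp, sqrt_div (by positivity)]
  field_simp

lemma integral_exp_neg_mul_sq_div_sub_one_gaussianReal_le (θ : ℝ) {σ w : ℝ} (hσ : σ ≠ 0)
    (hw : 0 ≤ w) :
    ∫ y, exp (-w * ((y / σ) ^ 2 - 1)) ∂gaussianReal θ (σ ^ 2).toNNReal ≤
      exp (w ^ 2 - w * (θ / σ) ^ 2 + 2 * w ^ 2 * (θ / σ) ^ 2) := by
  have hσ2 : 0 < σ ^ 2 := by positivity
  have hv : (σ ^ 2).toNNReal ≠ 0 := by simpa using hσ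
  have hvσ : ((σ ^ 2).toNNReal : ℝ) = σ ^ 2 := coe_toNNReal _ hσ2.le
  have hpt : ∀ y, exp (-w * ((y / σ) ^ 2 - 1)) = exp w * exp (-w / σ ^ 2 * y ^ 2) := by
    intro y
    rw [← exp_add]
    congr 1
    field_simp
    ring
  have hD : 1 - 2 * σ ^ 2 * (-w / σ ^ 2) = 1 + 2 * w := by field_simp; ring
  simp_rw [hpt]
  rw [integral_const_mul, integral_exp_mul_sq_gaussianReal θ hv (by rw [hvσ]; linarith),
    hvσ, hD]
  set p := (θ / σ) ^ 2
  have hp : 0 ≤ p := sq_nonneg _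
  have hquad : -w / σ ^ 2 * θ ^ 2 / (1 + 2 * w) = -(w * p) / (1 + 2 * w) := by
    simp only [p, div_pow]; ring
  have hnorm : exp w * (√(1 + 2 * w))⁻¹ ≤ exp (w ^ 2) := by
    rw [← div_eq_mul_inv, div_le_iff₀ (by positivity),
      show exp w = exp (w - w ^ 2) * exp (w ^ 2) by rw [← exp_add]; ring_nf, mul_comm]
    exact mul_le_mul_of_nonneg_left (exp_sub_sq_le_sqrt_one_add_two_mul hw) (exp_pos _).le
  have hmean : -(w * p) / (1 + 2 * w) ≤ -(w * p) + 2 * w ^ 2 * p := by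
    rw [div_le_iff₀ (by linarith)]
    nlinarith [mul_nonneg (mul_nonneg hw hw) (mul_nonneg hw hp)]
  rw [hquad]
  calc exp w * ((√(1 + 2 * w))⁻¹ * exp (-(w * p) / (1 + 2 * w)))
      = exp w * (√(1 + 2 * w))⁻¹ * exp (-(w * p) / (1 + 2 * w)) := by ring
    _ ≤ exp (w ^ 2) * exp (-(w * p) + 2 * w ^ 2 * p) :=
      mul_le_mul hnorm (exp_le_exp.2 hmean) (exp_pos _).le (exp_pos _).le
    _ = exp (w ^ 2 - w * p + 2 * w ^ 2 * p) := by rw [← exp_add]; ring_nf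

lemma measureReal_pi_gaussianReal_pos_of_mem_nhds {ι : Type*} [Fintype ι] (θ : ι → ℝ)
    {v : ℝ≥0} (hv : v ≠ 0) {s : Set (ι → ℝ)} {x : ι → ℝ} (hs : s ∈ 𝓝 x) :
    0 < (Measure.pi fun k => gaussianReal (θ k) v).real s := by
  have : ∀ k, (gaussianReal (θ k) v).IsOpenPosMeasure := fun k =>
    (gaussianReal_absolutelyContinuous' _ hv).isOpenPosMeasure
  exact ENNReal.toReal_pos (Measure.measure_pos_of_mem_nhds _ hs).ne' (measure_ne_top _ _)

lemma mul_sum_sq_mul_le_of_mul_le {ι : Type*} {s : Finset ι} {ω p : ι → ℝ} {a c : ℝ}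
    (hω : ∀ k ∈ s, 0 ≤ ω k) (hp : ∀ k ∈ s, 0 ≤ p k) (h : ∀ k ∈ s, a * ω k ≤ c) :
    a * ∑ k ∈ s, ω k ^ 2 * p k ≤ c * ∑ k ∈ s, ω k * p k := by
  rw [Finset.mul_sum, Finset.mul_sum]
  refine Finset.sum_le_sum fun k hk => ?_
  calc a * (ω k ^ 2 * p k) = a * ω k * (ω k * p k) := by ring
    _ ≤ c * (ω k * p k) := mul_le_mul_of_nonneg_right (h k hk) (mul_nonneg (hω k hk) (hp k hk))

lemma sum_sq_mul_le_of_sum_mul_mul_le {ι : Type*} {s : Finset ι} {ω p : ι → ℝ} {c : ℝ}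
    (hω : ∀ k ∈ s, 0 ≤ ω k) (hp : ∀ k ∈ s, 0 ≤ p k) (hc : 0 ≤ c)
    (h : ∀ k ∈ s, (∑ j ∈ s, ω j * p j) * ω k ≤ c) :
    ∑ k ∈ s, ω k ^ 2 * p k ≤ c := by
  have hωp : ∀ k ∈ s, 0 ≤ ω k * p k := fun k hk => mul_nonneg (hω k hk) (hp k hk)
  rcases (Finset.sum_nonneg hωp).eq_or_lt with hm | hm
  · have hzero := (Finset.sum_eq_zero_iff_of_nonneg hωp).1 hm.symm
    rw [Finset.sum_eq_zero fun k hk => by rw [sq, mul_assoc, hzero k hk, mul_zero]]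
    exact hc
  · refine le_of_mul_le_mul_left ?_ hm
    rw [mul_comm _ c]
    exact mul_sum_sq_mul_le_of_mul_le hω hp h

section WeightedChiSq

variable {ι : Type*} [Fintype ι]

noncomputable def weightedChiSq (ω : ι → ℝ) (σ : ℝ) (x : ι → ℝ) : ℝ :=
  ∑ k, ω k * ((x k / σ) ^ 2 - 1)

noncomputable def weightedChiSqMean (ω : ι → ℝ) (σ : ℝ) (θ : ι → ℝ) : ℝ :=
  (∑ k, ω k * θ k ^ 2) / σ ^ 2

lemma weightedChiSqMean_eq_sum (ω : ι → ℝ) (σ : ℝ) (θ : ι → ℝ) :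
    weightedChiSqMean ω σ θ = ∑ k, ω k * (θ k / σ) ^ 2 := by
  simp_rw [weightedChiSqMean, Finset.sum_div, div_pow, mul_div_assoc]

theorem measureReal_weightedChiSq_sub_mean_le_neg_le {ω : ι → ℝ} (hω : ∀ k, 0 ≤ ω k)
    (θ : ι → ℝ) {σ : ℝ} (hσ : σ ≠ 0) {L : ℝ} (hL : 0 ≤ L) :
    (Measure.pi fun k => gaussianReal (θ k) (σ ^ 2).toNNReal).real
        {x | weightedChiSq ω σ x - weightedChiSqMean ω σ θ ≤ -L} ≤
      exp (-L ^ 2 + L ^ 2 * ∑ k, ω k ^ 2 + 2 * L ^ 2 * ∑ k, ω k ^ 2 * (θ k / σ) ^ 2) := by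
  set m := weightedChiSqMean ω σ θ
  set g : (ι → ℝ) → ℝ := fun x => weightedChiSq ω σ x - m
  have hfactor : ∀ x, exp (-L * g x) =
      exp (L * m) * ∏ k, exp (-(L * ω k) * ((x k / σ) ^ 2 - 1)) := by
    intro x
    have hsum : ∑ k, -(L * ω k) * ((x k / σ) ^ 2 - 1) = -L * weightedChiSq ω σ x := by
      rw [weightedChiSq, Finset.mul_sum]
      exact Finset.sum_congr rfl fun k _ => by ring
    rw [← exp_sum, ← exp_add, hsum]
    congr 1
    ring
  have hmgf : mgf g (Measure.pi fun k => gaussianReal (θ k) (σ ^ 2).toNNReal) (-L) ≤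
      exp (L * m) * exp (∑ k, ((L * ω k) ^ 2 - L * ω k * (θ k / σ) ^ 2
        + 2 * (L * ω k) ^ 2 * (θ k / σ) ^ 2)) := by
    rw [mgf]
    simp_rw [hfactor]
    rw [integral_const_mul,
      integral_fintype_prod_eq_prod fun k y => exp (-(L * ω k) * ((y / σ) ^ 2 - 1)), exp_sum]
    exact mul_le_mul_of_nonneg_left (Finset.prod_le_prod
      (fun k _ => integral_nonneg fun _ => (exp_pos _).le)
      fun k _ => integral_exp_neg_mul_sq_div_sub_one_gaussianReal_le (θ k) hσ
        (mul_nonneg hL (hω k))) (exp_pos _).le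
  have hint : Integrable (fun x => exp (-L * g x))
      (Measure.pi fun k => gaussianReal (θ k) (σ ^ 2).toNNReal) := by
    have hcont : Continuous fun x => exp (-L * g x) := by
      simp only [g, weightedChiSq]
      fun_prop
    refine Integrable.of_bound hcont.aestronglyMeasurable (exp (L * (∑ k, ω k + m)))
      (ae_of_all _ fun x => ?_)
    have hg : -∑ k, ω k ≤ weightedChiSq ω σ x := by
      rw [weightedChiSq, ← Finset.sum_neg_distrib]
      exact Finset.sum_le_sum fun k _ => by nlinarith [hω k, sq_nonneg (x k / σ)]
    rw [norm_of_nonneg (exp_pos _).le, exp_le_exp]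
    nlinarith
  have hterm : ∀ k, (L * ω k) ^ 2 - L * ω k * (θ k / σ) ^ 2 + 2 * (L * ω k) ^ 2 * (θ k / σ) ^ 2
      = L ^ 2 * ω k ^ 2 - L * (ω k * (θ k / σ) ^ 2) + 2 * L ^ 2 * (ω k ^ 2 * (θ k / σ) ^ 2) :=
    fun k => by ring
  calc (Measure.pi fun k => gaussianReal (θ k) (σ ^ 2).toNNReal).real {x | g x ≤ -L}
      ≤ exp (-(-L) * -L) * mgf g (Measure.pi fun k => gaussianReal (θ k) (σ ^ 2).toNNReal) (-L) :=
        measure_le_le_exp_mul_mgf _ (by linarith) hint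
    _ ≤ exp (-(-L) * -L) * (exp (L * m) * exp (∑ k, ((L * ω k) ^ 2 - L * ω k * (θ k / σ) ^ 2
          + 2 * (L * ω k) ^ 2 * (θ k / σ) ^ 2))) :=
        mul_le_mul_of_nonneg_left hmgf (exp_pos _).le
    _ = _ := by
        simp only [hterm, Finset.sum_add_distrib, Finset.sum_sub_distrib, ← Finset.mul_sum]
        rw [← exp_add, ← exp_add, show m = _ from weightedChiSqMean_eq_sum ω σ θ]
        congr 1
        ring

lemma measureReal_weightedChiSq_sub_mean_le_pos (ω θ : ι → ℝ) {σ : ℝ} (hσ : σ ≠ 0) {T : ℝ}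
    (hT : -∑ k, ω k - weightedChiSqMean ω σ θ < T) :
    0 < (Measure.pi fun k => gaussianReal (θ k) (σ ^ 2).toNNReal).real
      {x | weightedChiSq ω σ x - weightedChiSqMean ω σ θ ≤ T} := by
  have hg : Continuous fun x => weightedChiSq ω σ x - weightedChiSqMean ω σ θ := by
    simp only [weightedChiSq]
    fun_prop
  have hzero : weightedChiSq ω σ 0 - weightedChiSqMean ω σ θ < T := by
    simpa [weightedChiSq, Finset.sum_neg_distrib] using hT
  exact measureReal_pi_gaussianReal_pos_of_mem_nhds θ (by simpa using hσ)
    ((hg.continuousAt.eventually_lt continuousAt_const hzero).mono fun _ => le_of_lt)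

end WeightedChiSq

/-- Uniform lower-tail exponential bound under the alternative: for
`X_k = θ_k + εξ_k`, `t_ε(θ) = Σ ω_{ε,k}[(X_k/ε)² − 1]`, `m_ε(θ) = ε⁻² Σ ω_{ε,k}θ_k²`,
with `Σ ω² = 1/2`, `T_ε → −∞`, `T_ε max ω → 0` and `sup_{θ∈A_ε} m_ε(θ) max ω → 0`, one
has, uniformly in `θ ∈ A_ε`, `P_θ(t_ε(θ) − m_ε(θ) ≤ T_ε) ≤ exp(−(T_ε²/2)(1+o(1)))`. -/
theorem lower_tail_bound_alternative
    (ι : Type*) (F : ℝ → Finset ι) (ω : ℝ → ι → ℝ)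
    (hωpos : ∀ᶠ ε in 𝓝[>] (0 : ℝ), ∀ k ∈ F ε, 0 < ω ε k)
    (hωnorm : ∀ᶠ ε in 𝓝[>] (0 : ℝ), ∑ k ∈ F ε, (ω ε k) ^ 2 = 1 / 2)
    (A : (ε : ℝ) → Set (↥(F ε) → ℝ))
    (T : ℝ → ℝ) (hT : Tendsto T (𝓝[>] (0 : ℝ)) atBot)
    (hTω : ∀ κ > (0 : ℝ), ∀ᶠ ε in 𝓝[>] (0 : ℝ), ∀ k ∈ F ε, |T ε| * ω ε k < κ)
    (hmω : ∀ κ > (0 : ℝ), ∀ᶠ ε in 𝓝[>] (0 : ℝ), ∀ θ ∈ A ε, ∀ k ∈ F ε,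
      ((∑ j : ↥(F ε), ω ε ↑j * (θ j) ^ 2) / ε ^ 2) * ω ε k < κ) :
    ∀ b : ℝ, -(1 / 2 : ℝ) < b → ∀ᶠ ε in 𝓝[>] (0 : ℝ), ∀ θ ∈ A ε,
      Real.log (((Measure.pi fun k : ↥(F ε) =>
            gaussianReal (θ k) ((ε ^ 2).toNNReal))
          {x | (∑ k : ↥(F ε), ω ε ↑k * ((x k / ε) ^ 2 - 1))
                - (∑ j : ↥(F ε), ω ε ↑j * (θ j) ^ 2) / ε ^ 2 ≤ T ε}).toReal)
        ≤ b * (T ε) ^ 2 := by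
  intro b hb
  -- the tolerance `(b + 1/2)/2` for `max ω · m` is what turns `-T²/2` into `b T²`
  filter_upwards [self_mem_nhdsWithin, hωpos, hωnorm, hT.eventually_lt_atBot 0,
    hTω (1 / 4) (by norm_num), hmω ((b + 1 / 2) / 2) (by linarith)]
    with ε (hε : 0 < ε) hpos hnorm hTneg hTsmall hmsmall θ hθ
  have hω : ∀ k : F ε, 0 ≤ ω ε k := fun k => (hpos k k.2).le
  have hsq : ∑ k : F ε, ω ε k ^ 2 = 1 / 2 := by
    rw [Finset.sum_coe_sort (F ε) fun k => ω ε k ^ 2]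
    exact hnorm
  have hmean := weightedChiSqMean_eq_sum (fun k : F ε => ω ε k) ε θ
  have hsecond : ∑ k : F ε, ω ε k ^ 2 * (θ k / ε) ^ 2 ≤ (b + 1 / 2) / 2 :=
    sum_sq_mul_le_of_sum_mul_mul_le (fun k _ => hω k) (fun k _ => sq_nonneg _) (by linarith)
      fun k _ => hmean ▸ (hmsmall θ hθ k k.2).le
  have hweights : |T ε| * ∑ k : F ε, ω ε k ^ 2 * 1 ≤ 1 / 4 * ∑ k : F ε, ω ε k * 1 :=
    mul_sum_sq_mul_le_of_mul_le (fun k _ => hω k) (fun _ _ => zero_le_one)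
      fun k _ => (hTsmall k k.2).le
  simp only [mul_one, hsq, abs_of_neg hTneg] at hweights
  have hP := measureReal_weightedChiSq_sub_mean_le_pos (fun k : F ε => ω ε k) θ hε.ne'
    (T := T ε) (by
      rw [hmean]
      nlinarith [Finset.sum_nonneg fun k (_ : k ∈ Finset.univ) =>
        mul_nonneg (hω k) (sq_nonneg (θ k / ε))])
  have hbound := measureReal_weightedChiSq_sub_mean_le_neg_le hω θ hε.ne' (L := -T ε)
    (by linarith)
  rw [neg_neg, hsq] at hbound
  refine (log_le_iff_le_exp hP).2 (hbound.trans (exp_le_exp.2 ?_))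
  nlinarith [sq_nonneg (T ε)]
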